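/- If T ∈ 𝒯_hom is irregular (no orbit of a lift is ρ_T-bounded), then T is topologically transitive: for any two nonempty open sets U, V ⊆ 𝕋² there exists n ∈ ℕ with Tⁿ(U) ∩ V ≠ ∅. -/

import Mathlib

open Set Filter Topology Function

noncomputable section

/-- The fibre maps of the iterates of the lifted skew product:
`fibIter F ω θ n x = T̂ⁿ_θ(x̂)`. -/
def fibIter (F : ℝ → ℝ → ℝ) (ω : ℝ) (θ : ℝ) : ℕ → ℝ → ℝ
  | 0, x => x
  | n + 1, x => F (θ + n * ω) (fibIter F ω θ n x)

/-!
If every point had a time at which its deviation from the rigid rotation by `ρ` exceeds `1`,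
compactness of the torus would bound these times and the deviation would grow linearly along an
orbit, contradicting the rotation number `ρ`; so some orbit is `ρ`-bounded above and, symmetrically,
some orbit is `ρ`-bounded below. The irrational rotation carries both over any base point `θ₀`.
Irregularity makes the orbit that is bounded above unbounded below, so at some time the fibre maps
over two points near `θ₀` separate `x₀` by more than a full turn. A bounded wait brings the base
near any `θ₁` without closing this gap, and the intermediate value theorem in `θ` then sends `x₀`
onto `x₁` modulo `1`.
-/

structure IsFibredLift (F : ℝ → ℝ → ℝ) : Prop where
  continuous : Continuous fun p : ℝ × ℝ => F p.1 p.2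
  periodic : ∀ θ x, F (θ + 1) x = F θ x
  map_add_one : ∀ θ x, F θ (x + 1) = F θ x + 1

-- The orbit of `(θ, x)` is ρ-bounded in the paper's sense iff `deviation F ω ρ θ x` is bounded.
def deviation (F : ℝ → ℝ → ℝ) (ω ρ θ x : ℝ) (n : ℕ) : ℝ :=
  fibIter F ω θ n x - x - n * ρ

lemma map_add_int_of_map_add_one {g : ℝ → ℝ} (hg : ∀ x, g (x + 1) = g x + 1) (k : ℤ) (x : ℝ) :
    g (x + k) = g x + k := by
  have hper : Periodic (fun x => g x - x) 1 := fun x => by simp only [hg]; ring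
  have := hper.int_mul k x
  simp only [mul_one] at this
  linarith

lemma AddCircle.coe_add_intCast (x : ℝ) (k : ℤ) :
    ((x + k : ℝ) : AddCircle (1 : ℝ)) = x := by
  rw [AddCircle.coe_add, add_eq_left, AddCircle.coe_eq_zero_iff]
  exact ⟨k, by simp⟩

lemma AddCircle.dist_coe_le (a b : ℝ) : dist (a : AddCircle (1 : ℝ)) b ≤ |a - b| := by
  rw [dist_eq_norm, ← AddCircle.coe_sub]
  exact QuotientAddGroup.norm_mk_le_norm

lemma AddCircle.exists_abs_sub_intCast_sub_lt {a b δ : ℝ}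
    (h : dist (a : AddCircle (1 : ℝ)) b < δ) : ∃ ℓ : ℤ, |a - ℓ - b| < δ := by
  rw [dist_eq_norm, ← AddCircle.coe_sub, UnitAddCircle.norm_eq] at h
  exact ⟨round (a - b), by rwa [sub_right_comm]⟩

lemma fract_mem_unitSquare (θ x : ℝ) :
    (Int.fract θ, Int.fract x) ∈ Icc (0 : ℝ) 1 ×ˢ Icc (0 : ℝ) 1 :=
  ⟨⟨Int.fract_nonneg θ, (Int.fract_lt_one θ).le⟩, ⟨Int.fract_nonneg x, (Int.fract_lt_one x).le⟩⟩

lemma exists_abs_le_of_fract_invariant {f : ℝ × ℝ → ℝ} (hf : Continuous f)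
    (hfract : ∀ θ x, f (Int.fract θ, Int.fract x) = f (θ, x)) : ∃ C, ∀ p, |f p| ≤ C := by
  obtain ⟨C, hC⟩ := (isCompact_Icc.prod isCompact_Icc).exists_bound_of_continuousOn hf.continuousOn
  exact ⟨C, fun ⟨θ, x⟩ => hfract θ x ▸ hC _ (fract_mem_unitSquare θ x)⟩

lemma exists_uniform_index_of_fract_invariant {f : ℕ → ℝ × ℝ → ℝ} (hf : ∀ n, Continuous (f n))
    (hfract : ∀ n θ x, f n (Int.fract θ, Int.fract x) = f n (θ, x)) {c : ℝ}
    (h : ∀ p, ∃ n, c < f n p) : ∃ N, ∀ p, ∃ n ≤ N, c < f n p := by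
  obtain ⟨t, ht⟩ := (isCompact_Icc.prod isCompact_Icc).elim_finite_subcover
    (fun n => {p | c < f n p}) (fun n => isOpen_lt continuous_const (hf n))
    (fun p _ => mem_iUnion.2 (h p))
  refine ⟨t.sup id, fun ⟨θ, x⟩ => ?_⟩
  obtain ⟨n, hn, hcn⟩ := mem_iUnion₂.1 (ht (fract_mem_unitSquare θ x))
  exact ⟨n, Finset.le_sup (f := id) hn, hfract n θ x ▸ hcn⟩

lemma not_tendsto_div_of_forall_exists_add_lt {D : ℕ → ℝ} (N : ℕ) (hD : D 0 = 0)
    (hstep : ∀ n, ∃ j ≤ N, D n + 1 < D (n + j)) :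
    ¬Tendsto (fun n => D n / n) atTop (𝓝 0) := by
  have hgrow : ∀ k : ℕ, ∃ n, k ≤ n ∧ n ≤ k * N ∧ (k : ℝ) ≤ D n := by
    intro k
    induction k with
    | zero => exact ⟨0, le_rfl, Nat.zero_le _, by simp [hD]⟩
    | succ k ih =>
      obtain ⟨n, hkn, hnN, hDn⟩ := ih
      obtain ⟨j, hjN, hj⟩ := hstep n
      have hj0 : j ≠ 0 := by rintro rfl; norm_num at hj
      refine ⟨n + j, by omega, by rw [add_mul, one_mul]; omega, ?_⟩
      push_cast
      linarith
  have hN : 0 < N := by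
    obtain ⟨j, hjN, hj⟩ := hstep 0
    have hj0 : j ≠ 0 := by rintro rfl; norm_num at hj
    omega
  intro hlim
  have hN' : (0 : ℝ) < 1 / N := by positivity
  obtain ⟨K, hK⟩ := eventually_atTop.1 (hlim.eventually (gt_mem_nhds hN'))
  obtain ⟨n, hkn, hnN, hDn⟩ := hgrow (K + 1)
  have hn : (0 : ℝ) < n := by exact_mod_cast (show 0 < n by omega)
  have hnN' : (n : ℝ) ≤ (K + 1 : ℕ) * N := by exact_mod_cast hnN
  have := hK n (by omega)
  rw [div_lt_div_iff₀ hn (by positivity)] at this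
  nlinarith

lemma exists_bounded_return {ω : ℝ} (hirr : Irrational ω) {δ : ℝ} (hδ : 0 < δ) :
    ∃ G : ℕ, ∀ t a : ℝ, ∃ r ≤ G, dist ((t + r * ω : ℝ) : AddCircle (1 : ℝ)) a < δ := by
  have hdense : DenseRange fun z : ℤ => ((z * ω : ℝ) : AddCircle (1 : ℝ)) := by
    have hsmul : (fun z : ℤ => ((z * ω : ℝ) : AddCircle (1 : ℝ))) = (· • (ω : AddCircle (1 : ℝ))) :=
      funext fun z => by rw [← zsmul_eq_mul, AddCircle.coe_zsmul]
    rw [hsmul, AddCircle.denseRange_zsmul_coe_iff, div_one]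
    exact hirr
  obtain ⟨s, hs⟩ := isCompact_univ.elim_finite_subcover
    (fun z : ℤ => Metric.ball ((z * ω : ℝ) : AddCircle (1 : ℝ)) δ) (fun _ => Metric.isOpen_ball)
    (fun y _ => mem_iUnion.2 ((hdense.exists_dist_lt y hδ)))
  set G := s.sup Int.natAbs
  -- shifting by `G` turns the two-sided return times `z` with `|z| ≤ G` into forward ones
  refine ⟨2 * G, fun t a => ?_⟩
  obtain ⟨z, hz, hdist⟩ := mem_iUnion₂.1 (hs (mem_univ ((a - t - G * ω : ℝ) : AddCircle (1 : ℝ))))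
  have hzG : z.natAbs ≤ G := Finset.le_sup (f := Int.natAbs) hz
  refine ⟨(z + G).toNat, by omega, ?_⟩
  have hr : (((z + G).toNat : ℕ) : ℝ) = z + G := by
    rw [← Int.cast_natCast, Int.toNat_of_nonneg (by omega)]
    push_cast
    ring
  rw [Metric.mem_ball, dist_comm, dist_eq_norm, ← AddCircle.coe_sub] at hdist
  rw [hr, dist_eq_norm, ← AddCircle.coe_sub]
  convert hdist using 3
  ring

lemma exists_mem_uIcc_coe_eq {g : ℝ → ℝ} (hg : Continuous g) {a b : ℝ} (hab : g a + 1 ≤ g b)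
    (x : ℝ) : ∃ θ ∈ uIcc a b, (g θ : AddCircle (1 : ℝ)) = x := by
  have hw : x + ⌈g a - x⌉ ∈ uIcc (g a) (g b) :=
    mem_uIcc_of_le (by linarith [Int.le_ceil (g a - x)])
      (by linarith [Int.ceil_lt_add_one (g a - x)])
  obtain ⟨θ, hθ, hgθ⟩ := intermediate_value_uIcc hg.continuousOn hw
  exact ⟨θ, hθ, by rw [hgθ, AddCircle.coe_add_intCast]⟩

section FibIter

variable {F : ℝ → ℝ → ℝ} {ω : ℝ}

lemma fibIter_add (θ x : ℝ) (n m : ℕ) :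
    fibIter F ω θ (n + m) x = fibIter F ω (θ + n * ω) m (fibIter F ω θ n x) := by
  induction m with
  | zero => rfl
  | succ m ih =>
    rw [← add_assoc, fibIter, fibIter, ih]
    push_cast
    ring_nf

lemma strictMono_fibIter (hFm : ∀ θ, StrictMono (F θ)) (θ : ℝ) (n : ℕ) :
    StrictMono (fibIter F ω θ n) := by
  induction n with
  | zero => exact strictMono_id
  | succ n ih => exact (hFm _).comp ih

lemma continuous_fibIter (hFc : Continuous fun p : ℝ × ℝ => F p.1 p.2) (n : ℕ) :
    Continuous fun p : ℝ × ℝ => fibIter F ω p.1 n p.2 := by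
  induction n with
  | zero => exact continuous_snd
  | succ n ih => exact hFc.comp ((continuous_fst.add continuous_const).prodMk ih)

lemma fibIter_add_int (hFx : ∀ θ x, F θ (x + 1) = F θ x + 1) (θ : ℝ) (n : ℕ) (k : ℤ)
    (x : ℝ) : fibIter F ω θ n (x + k) = fibIter F ω θ n x + k := by
  refine map_add_int_of_map_add_one (fun y => ?_) k x
  induction n with
  | zero => rfl
  | succ n ih => rw [fibIter, fibIter, ih, hFx]

lemma fibIter_periodic (hFθ : ∀ θ x, F (θ + 1) x = F θ x) (n : ℕ) (x : ℝ) :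
    Periodic (fun θ => fibIter F ω θ n x) 1 := by
  intro θ
  induction n with
  | zero => rfl
  | succ n ih =>
    simp only [fibIter] at ih ⊢
    rw [ih, add_right_comm, hFθ]

lemma fibIter_fract_sub (hFθ : ∀ θ x, F (θ + 1) x = F θ x)
    (hFx : ∀ θ x, F θ (x + 1) = F θ x + 1) (n : ℕ) (θ x : ℝ) :
    fibIter F ω (Int.fract θ) n (Int.fract x) - Int.fract x = fibIter F ω θ n x - x := by
  have hθ := (fibIter_periodic (ω := ω) hFθ n x).int_mul ⌊θ⌋ (Int.fract θ)
  have hx := fibIter_add_int (ω := ω) hFx (Int.fract θ) n ⌊x⌋ (Int.fract x)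
  simp only [mul_one, Int.fract_add_floor] at hθ hx
  linarith [Int.fract_add_floor x]

lemma sub_le_fibIter_sub_fibIter_add_one (hFm : ∀ θ, StrictMono (F θ))
    (hFx : ∀ θ x, F θ (x + 1) = F θ x + 1) (θ : ℝ) (n : ℕ) (y z : ℝ) :
    z - y ≤ fibIter F ω θ n z - fibIter F ω θ n y + 1 := by
  have hmono := (strictMono_fibIter (ω := ω) hFm θ n).monotone
    (show y + ⌊z - y⌋ ≤ z by linarith [Int.floor_le (z - y)])
  rw [fibIter_add_int hFx] at hmono
  linarith [Int.lt_floor_add_one (z - y)]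

lemma abs_fibIter_sub_le {B : ℝ} (hB : ∀ θ x, |F θ x - x| ≤ B) (θ : ℝ) (n : ℕ) (x : ℝ) :
    |fibIter F ω θ n x - x| ≤ n * B := by
  induction n with
  | zero => simp [fibIter]
  | succ n ih =>
    calc |fibIter F ω θ (n + 1) x - x|
        ≤ |F (θ + n * ω) (fibIter F ω θ n x) - fibIter F ω θ n x| + |fibIter F ω θ n x - x| :=
          abs_sub_le _ _ _
      _ ≤ B + n * B := add_le_add (hB _ _) ih
      _ = (n + 1 : ℕ) * B := by push_cast; ring

lemma sub_le_fibIter_sub_fibIter (hFm : ∀ θ, StrictMono (F θ))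
    (hFx : ∀ θ x, F θ (x + 1) = F θ x + 1) {B : ℝ} (hB : ∀ θ x, |F θ x - x| ≤ B)
    (θ θ' : ℝ) (n : ℕ) (y z : ℝ) :
    z - y ≤ fibIter F ω θ n z - fibIter F ω θ' n y + 1 + 2 * n * B := by
  have h₁ := sub_le_fibIter_sub_fibIter_add_one (ω := ω) hFm hFx θ n y z
  have h₂ := abs_le.1 (abs_fibIter_sub_le (ω := ω) hB θ n y)
  have h₃ := abs_le.1 (abs_fibIter_sub_le (ω := ω) hB θ' n y)
  linarith [h₂.1, h₃.2]

lemma iterate_coe_eq {T : AddCircle (1:ℝ) × AddCircle (1:ℝ) → AddCircle (1:ℝ) × AddCircle (1:ℝ)}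
    (hproj : ∀ θ x : ℝ, T ((θ : AddCircle (1:ℝ)), (x : AddCircle (1:ℝ))) =
        (((θ + ω : ℝ) : AddCircle (1:ℝ)), ((F θ x : ℝ) : AddCircle (1:ℝ))))
    (n : ℕ) (θ x : ℝ) :
    T^[n] ((θ : AddCircle (1:ℝ)), (x : AddCircle (1:ℝ))) =
      (((θ + n * ω : ℝ) : AddCircle (1:ℝ)), ((fibIter F ω θ n x : ℝ) : AddCircle (1:ℝ))) := by
  induction n with
  | zero => simp [fibIter]
  | succ n ih =>
    rw [iterate_succ_apply', ih, hproj, fibIter]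
    push_cast
    ring_nf

lemma exists_abs_map_sub_le (hF : IsFibredLift F) :
    ∃ B, ∀ θ x, |F θ x - x| ≤ B := by
  obtain ⟨B, hB⟩ := exists_abs_le_of_fract_invariant (f := fun p => F p.1 p.2 - p.2)
    (hF.continuous.sub continuous_snd)
    fun θ x => by
      simpa [fibIter] using fibIter_fract_sub (ω := 0) hF.periodic hF.map_add_one 1 θ x
  exact ⟨B, fun θ x => hB (θ, x)⟩

end FibIter

section Deviation

variable {F : ℝ → ℝ → ℝ} {ω ρ : ℝ}

lemma deviation_add (θ x : ℝ) (n m : ℕ) :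
    deviation F ω ρ θ x (n + m) =
      deviation F ω ρ θ x n + deviation F ω ρ (θ + n * ω) (fibIter F ω θ n x) m := by
  simp only [deviation, fibIter_add]
  push_cast
  ring

lemma deviation_orbit (hFθ : ∀ θ x, F (θ + 1) x = F θ x) (θ x : ℝ) (r : ℕ) (ℓ : ℤ) (n : ℕ) :
    deviation F ω ρ (θ + r * ω - ℓ) (fibIter F ω θ r x) n =
      deviation F ω ρ θ x (r + n) - deviation F ω ρ θ x r := by
  have hper := (fibIter_periodic (ω := ω) hFθ n (fibIter F ω θ r x)).sub_int_mul_eq ℓ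
    (x := θ + r * ω)
  rw [mul_one] at hper
  rw [deviation_add, add_sub_cancel_left, deviation, deviation, hper]

lemma tendsto_deviation_div {θ x : ℝ}
    (hρ : Tendsto (fun n : ℕ => (fibIter F ω θ n x - x) / n) atTop (𝓝 ρ)) :
    Tendsto (fun n : ℕ => deviation F ω ρ θ x n / n) atTop (𝓝 0) := by
  have h := hρ.sub_const ρ
  rw [sub_self] at h
  refine h.congr' ((eventually_ne_atTop 0).mono fun n hn => ?_)
  simp only [deviation]
  rw [sub_div _ (n * ρ), mul_div_cancel_left₀ _ (Nat.cast_ne_zero.2 hn)]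

lemma exists_forall_deviation_le_one (hF : IsFibredLift F) {θ₀ x₀ : ℝ}
    (hρ : Tendsto (fun n : ℕ => (fibIter F ω θ₀ n x₀ - x₀) / n) atTop (𝓝 ρ)) :
    ∃ θ x, ∀ n, deviation F ω ρ θ x n ≤ 1 := by
  by_contra! h
  obtain ⟨N, hN⟩ := exists_uniform_index_of_fract_invariant
    (f := fun n p => deviation F ω ρ p.1 p.2 n)
    (fun n => ((continuous_fibIter hF.continuous n).sub continuous_snd).sub continuous_const)
    (fun n θ x => by
      simp only [deviation, sub_left_inj]
      exact fibIter_fract_sub hF.periodic hF.map_add_one n θ x)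
    (fun p => h p.1 p.2)
  refine not_tendsto_div_of_forall_exists_add_lt N (by simp [deviation, fibIter])
    (fun n => ?_) (tendsto_deviation_div hρ)
  obtain ⟨j, hjN, hj⟩ := hN (θ₀ + n * ω, fibIter F ω θ₀ n x₀)
  exact ⟨j, hjN, by rw [deviation_add]; linarith⟩

lemma IsFibredLift.neg (hF : IsFibredLift F) : IsFibredLift fun θ x => -F θ (-x) where
  continuous := (hF.continuous.comp (continuous_fst.prodMk continuous_snd.neg)).neg
  periodic θ x := by rw [hF.periodic]
  map_add_one θ x := by
    have := hF.map_add_one θ (-(x + 1))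
    rw [show -(x + 1) + 1 = -x by ring] at this
    linarith

lemma fibIter_neg (θ x : ℝ) (n : ℕ) :
    fibIter (fun θ x => -F θ (-x)) ω θ n x = -fibIter F ω θ n (-x) := by
  induction n with
  | zero => simp [fibIter]
  | succ n ih => simp [fibIter, ih]

lemma exists_forall_neg_one_le_deviation (hF : IsFibredLift F) {θ₀ x₀ : ℝ}
    (hρ : Tendsto (fun n : ℕ => (fibIter F ω θ₀ n x₀ - x₀) / n) atTop (𝓝 ρ)) :
    ∃ θ x, ∀ n, -1 ≤ deviation F ω ρ θ x n := by
  have hρ' : Tendsto (fun n : ℕ => (fibIter (fun θ x => -F θ (-x)) ω θ₀ n (-x₀) - -x₀) / n)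
      atTop (𝓝 (-ρ)) := by
    refine hρ.neg.congr fun n => ?_
    rw [fibIter_neg, neg_neg]
    ring
  obtain ⟨θ, x, h⟩ := exists_forall_deviation_le_one hF.neg hρ'
  refine ⟨θ, -x, fun n => ?_⟩
  have := h n
  simp only [deviation, fibIter_neg] at this ⊢
  linarith

lemma exists_lt_of_forall_le_of_unbounded {D : ℕ → ℝ} (hunb : ¬∃ C, ∀ n, |D n| ≤ C) {C : ℝ}
    (hle : ∀ n, D n ≤ C) (K : ℝ) : ∃ n, D n < K := by
  by_contra! hge
  exact hunb ⟨max C (-K), fun n => abs_le.2 ⟨by linarith [le_max_right C (-K), hge n],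
    (hle n).trans (le_max_left _ _)⟩⟩

lemma exists_fibIter_add_le_fibIter (hFm : ∀ θ, StrictMono (F θ))
    (hFx : ∀ θ x, F θ (x + 1) = F θ x + 1) {β y β' y' C C' : ℝ}
    (hunb : ¬∃ C, ∀ n, |deviation F ω ρ β y n| ≤ C) (hle : ∀ n, deviation F ω ρ β y n ≤ C)
    (hge : ∀ n, C' ≤ deviation F ω ρ β' y' n) (x K : ℝ) :
    ∃ m, fibIter F ω β m x + K ≤ fibIter F ω β' m x := by
  obtain ⟨m, hm⟩ := exists_lt_of_forall_le_of_unbounded hunb hle (C' - K - 2)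
  refine ⟨m, ?_⟩
  have h₁ := sub_le_fibIter_sub_fibIter_add_one (ω := ω) hFm hFx β m x y
  have h₂ := sub_le_fibIter_sub_fibIter_add_one (ω := ω) hFm hFx β' m y' x
  have h₃ := hge m
  simp only [deviation] at hm h₃
  linarith

end Deviation

section Transitivity

variable {F : ℝ → ℝ → ℝ} {ω ρ : ℝ}

lemma exists_near_shifted_orbit (hFθ : ∀ θ x, F (θ + 1) x = F θ x) (hirr : Irrational ω)
    {δ : ℝ} (hδ : 0 < δ) (θ x θ₀ : ℝ) :
    ∃ β y : ℝ, ∃ r : ℕ, |β - θ₀| < δ ∧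
      ∀ n, deviation F ω ρ β y n = deviation F ω ρ θ x (r + n) - deviation F ω ρ θ x r := by
  obtain ⟨G, hG⟩ := exists_bounded_return hirr hδ
  obtain ⟨r, -, hr⟩ := hG θ θ₀
  obtain ⟨ℓ, hℓ⟩ := AddCircle.exists_abs_sub_intCast_sub_lt hr
  exact ⟨θ + r * ω - ℓ, fibIter F ω θ r x, r, hℓ, deviation_orbit hFθ θ x r ℓ⟩

theorem exists_fibIter_coe_eq (hF : IsFibredLift F) (hFm : ∀ θ, StrictMono (F θ))
    (hirr : Irrational ω)
    (hρ : ∀ θ x : ℝ, Tendsto (fun n : ℕ => (fibIter F ω θ n x - x) / n) atTop (𝓝 ρ))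
    (hirrT : ∀ θ x : ℝ, ¬∃ C : ℝ, ∀ n : ℕ, |deviation F ω ρ θ x n| ≤ C)
    (θ₀ x₀ θ₁ x₁ : ℝ) {δ : ℝ} (hδ : 0 < δ) :
    ∃ s : ℕ, ∃ θ, |θ - θ₀| < δ ∧ dist ((θ + s * ω : ℝ) : AddCircle (1 : ℝ)) θ₁ < 2 * δ ∧
      ((fibIter F ω θ s x₀ : ℝ) : AddCircle (1 : ℝ)) = x₁ := by
  obtain ⟨G, hG⟩ := exists_bounded_return hirr hδ
  obtain ⟨B, hB⟩ := exists_abs_map_sub_le hF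
  have hB₀ : 0 ≤ B := (abs_nonneg _).trans (hB 0 0)
  obtain ⟨θa, xa, ha⟩ := exists_forall_deviation_le_one hF (hρ 0 0)
  obtain ⟨θb, xb, hb⟩ := exists_forall_neg_one_le_deviation hF (hρ 0 0)
  obtain ⟨β, y, rβ, hβ, hβy⟩ := exists_near_shifted_orbit (ρ := ρ) hF.periodic hirr hδ θa xa θ₀
  obtain ⟨β', y', rβ', hβ', hβy'⟩ :=
    exists_near_shifted_orbit (ρ := ρ) hF.periodic hirr hδ θb xb θ₀
  obtain ⟨m, hm⟩ := exists_fibIter_add_le_fibIter hFm hF.map_add_one (hirrT β y)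
    (C := 1 - deviation F ω ρ θa xa rβ) (fun n => by rw [hβy]; linarith [ha (rβ + n)])
    (C' := -1 - deviation F ω ρ θb xb rβ') (fun n => by rw [hβy']; linarith [hb (rβ' + n)])
    x₀ (2 + 2 * G * B)
  obtain ⟨r, hrG, hr⟩ := hG (θ₀ + m * ω) θ₁
  have hgap : fibIter F ω β (m + r) x₀ + 1 ≤ fibIter F ω β' (m + r) x₀ := by
    have hrB : (r : ℝ) * B ≤ G * B := mul_le_mul_of_nonneg_right (by exact_mod_cast hrG) hB₀
    have := sub_le_fibIter_sub_fibIter (ω := ω) hFm hF.map_add_one hB (β' + m * ω) (β + m * ω) r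
      (fibIter F ω β m x₀) (fibIter F ω β' m x₀)
    rw [fibIter_add, fibIter_add]
    linarith
  obtain ⟨θ, hθ, hθx⟩ := exists_mem_uIcc_coe_eq
    ((continuous_fibIter hF.continuous (m + r)).comp (continuous_id.prodMk continuous_const))
    hgap x₁
  have hθ₀ : |θ - θ₀| < δ := by
    rw [abs_lt] at hβ hβ' ⊢
    rcases mem_uIcc.1 hθ with h | h <;> constructor <;> linarith [h.1, h.2]
  refine ⟨m + r, θ, hθ₀, ?_, hθx⟩
  calc dist ((θ + (m + r : ℕ) * ω : ℝ) : AddCircle (1 : ℝ)) θ₁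
      ≤ dist ((θ + (m + r : ℕ) * ω : ℝ) : AddCircle (1 : ℝ)) ((θ₀ + m * ω + r * ω : ℝ)) +
        dist ((θ₀ + m * ω + r * ω : ℝ) : AddCircle (1 : ℝ)) θ₁ := dist_triangle _ _ _
    _ < δ + δ := by
      refine add_lt_add_of_le_of_lt ((AddCircle.dist_coe_le _ _).trans ?_) hr
      push_cast
      rw [show θ + (m + r) * ω - (θ₀ + m * ω + r * ω) = θ - θ₀ by ring]
      exact hθ₀.le
    _ = 2 * δ := by ring

end Transitivity

theorem irregular_implies_transitive_general
    (F : ℝ → ℝ → ℝ) (ω : ℝ) (hirr : Irrational ω)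
    (hFc : Continuous fun p : ℝ × ℝ => F p.1 p.2)
    (hFm : ∀ θ : ℝ, StrictMono (F θ))
    (hFx : ∀ θ x : ℝ, F θ (x + 1) = F θ x + 1)
    (hFθ : ∀ θ x : ℝ, F (θ + 1) x = F θ x)
    (T : AddCircle (1:ℝ) × AddCircle (1:ℝ) → AddCircle (1:ℝ) × AddCircle (1:ℝ))
    (hproj : ∀ θ x : ℝ,
      T ((θ : AddCircle (1:ℝ)), (x : AddCircle (1:ℝ))) =
        (((θ + ω : ℝ) : AddCircle (1:ℝ)), ((F θ x : ℝ) : AddCircle (1:ℝ))))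
    (ρ : ℝ)
    (hρ : ∀ θ x : ℝ, Tendsto (fun n : ℕ => (fibIter F ω θ n x - x) / n) atTop (nhds ρ))
    (hirrT : ∀ θ x : ℝ, ¬∃ C : ℝ, ∀ n : ℕ, |fibIter F ω θ n x - x - n * ρ| ≤ C) :
    ∀ U V : Set (AddCircle (1:ℝ) × AddCircle (1:ℝ)),
      IsOpen U → IsOpen V → U.Nonempty → V.Nonempty →
      ∃ n : ℕ, (T^[n] '' U ∩ V).Nonempty := by
  rintro U V hU hV ⟨⟨u₁, u₂⟩, hu⟩ ⟨⟨v₁, v₂⟩, hv⟩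
  obtain ⟨θ₀, rfl⟩ := QuotientAddGroup.mk_surjective u₁
  obtain ⟨x₀, rfl⟩ := QuotientAddGroup.mk_surjective u₂
  obtain ⟨θ₁, rfl⟩ := QuotientAddGroup.mk_surjective v₁
  obtain ⟨x₁, rfl⟩ := QuotientAddGroup.mk_surjective v₂
  obtain ⟨ε, hε, hεU⟩ := Metric.isOpen_iff.1 hU _ hu
  obtain ⟨ε', hε', hεV⟩ := Metric.isOpen_iff.1 hV _ hv
  obtain ⟨s, θ, hθ, hθs, hx⟩ := exists_fibIter_coe_eq ⟨hFc, hFθ, hFx⟩ hFm hirr hρ hirrT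
    θ₀ x₀ θ₁ x₁ (δ := min ε ε' / 2) (by positivity)
  refine ⟨s, T^[s] (θ, x₀), mem_image_of_mem _ (hεU ?_), hεV ?_⟩
  · rw [Metric.mem_ball, Prod.dist_eq, dist_self, max_eq_left dist_nonneg]
    exact (AddCircle.dist_coe_le _ _).trans_lt (by linarith [min_le_left ε ε'])
  · rw [iterate_coe_eq hproj, hx, Metric.mem_ball, Prod.dist_eq, dist_self,
      max_eq_left dist_nonneg]
    linarith [min_le_right ε ε']

/-- an irregular quasiperiodically forced circle homeomorphism is
topologically transitive. -/
theorem irregular_implies_transitive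
    (F : ℝ → ℝ → ℝ) (ω : ℝ) (hirr : Irrational ω)
    (hFc : Continuous fun p : ℝ × ℝ => F p.1 p.2)
    (hFm : ∀ θ : ℝ, StrictMono (F θ))
    (hFs : ∀ θ : ℝ, Function.Surjective (F θ))
    (hFx : ∀ θ x : ℝ, F θ (x + 1) = F θ x + 1)
    (hFθ : ∀ θ x : ℝ, F (θ + 1) x = F θ x)
    (T : AddCircle (1:ℝ) × AddCircle (1:ℝ) → AddCircle (1:ℝ) × AddCircle (1:ℝ))
    (hproj : ∀ θ x : ℝ,
      T ((θ : AddCircle (1:ℝ)), (x : AddCircle (1:ℝ))) =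
        (((θ + ω : ℝ) : AddCircle (1:ℝ)), ((F θ x : ℝ) : AddCircle (1:ℝ))))
    (ρ : ℝ)
    (hρ : ∀ θ x : ℝ, Tendsto (fun n : ℕ => (fibIter F ω θ n x - x) / n) atTop (nhds ρ))
    (hirrT : ∀ θ x : ℝ, ¬∃ C : ℝ, ∀ n : ℕ, |fibIter F ω θ n x - x - n * ρ| ≤ C) :
    ∀ U V : Set (AddCircle (1:ℝ) × AddCircle (1:ℝ)),
      IsOpen U → IsOpen V → U.Nonempty → V.Nonempty →
      ∃ n : ℕ, (T^[n] '' U ∩ V).Nonempty :=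
  irregular_implies_transitive_general F ω hirr hFc hFm hFx hFθ T hproj ρ hρ hirrT

end
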